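/- arXiv:1601.03463 — 3 statements merged into one kernel-verified Lean document; each statement's English description precedes it below -/
import Mathlib

section
/- Under the sandwich bound e^{−m₀^{(q)}} ∫₀ᵗ e^{−Y_s^{(+,q)}} ds ≤ ∫₀ᵗ e^{−ξ_s} ds ≤ e^{−i₀^{(q)}} ∫₀ᵗ e^{−Y_s^{(−,q)}} ds: if ξ is a Lévy process and Y^{(±,q)} are the compound Poisson processes built from the running supremum/infimum random walk decomposition at Poisson times, then for all t ≥ 0 the exponential functional I_t(ξ) is squeezed between the exponential functionals of the two compound Poisson processes up to the multiplicative factors e^{−m₀^{(q)}} and e^{−i₀^{(q)}}. -/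
open MeasureTheory ProbabilityTheory Filter Set Real

noncomputable section

/-- A real-valued Lévy process `ξ` under the probability measure `μ`:
càdlàg paths, `ξ 0 = 0`, stationary and independent increments. -/
structure IsLevyProcess {Ω : Type*} [MeasurableSpace Ω] (μ : Measure Ω)
    (ξ : ℝ → Ω → ℝ) : Prop where
  isProb : IsProbabilityMeasure μ
  meas : ∀ t, Measurable (ξ t)
  init : ∀ ω, ξ 0 ω = 0
  cadlag_right : ∀ ω t, ContinuousWithinAt (fun s => ξ s ω) (Ici t) t
  cadlag_left : ∀ ω t, 0 < t →
    ∃ l : ℝ, Tendsto (fun s => ξ s ω) (nhdsWithin t (Iio t)) (nhds l)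
  stationary : ∀ s t : ℝ, 0 ≤ s → s ≤ t →
    Measure.map (fun ω => ξ t ω - ξ s ω) μ = Measure.map (ξ (t - s)) μ
  indep : ∀ s t : ℝ, 0 ≤ s → s ≤ t →
    Indep (MeasurableSpace.comap (fun ω => ξ t ω - ξ s ω) (borel ℝ))
      (⨆ u ∈ Icc (0:ℝ) s, MeasurableSpace.comap (ξ u) (borel ℝ)) μ

/-- Laplace exponent `ψ(λ) = log E[exp (λ ξ₁)]`. -/
def laplaceExponent {Ω : Type*} [MeasurableSpace Ω] (μ : Measure Ω)
    (ξ : ℝ → Ω → ℝ) (l : ℝ) : ℝ :=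
  Real.log (∫ ω, Real.exp (l * ξ 1 ω) ∂μ)

/-- Exponential functional `I_t(ξ) = ∫₀ᵗ e^{-ξ_s} ds`. -/
def expFunctional {Ω : Type*} (ξ : ℝ → Ω → ℝ) (t : ℝ) (ω : Ω) : ℝ :=
  ∫ s in (0:ℝ)..t, Real.exp (-(ξ s ω))

/-- Exponential functional `I_∞(ξ) = ∫₀^∞ e^{-ξ_s} ds`. -/
def expFunctionalInf {Ω : Type*} (ξ : ℝ → Ω → ℝ) (ω : Ω) : ℝ :=
  ∫ s in Ioi (0:ℝ), Real.exp (-(ξ s ω))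

/-- `μ'` is the Esscher transform of `μ` (w.r.t. the Lévy process `ξ`) with
parameter `l`: on the natural σ-algebra up to time `t` it has density
`exp (l ξ_t - t ψ(l))` with respect to `μ`. -/
def IsEsscher {Ω : Type*} [MeasurableSpace Ω] (μ : Measure Ω) (ξ : ℝ → Ω → ℝ)
    (l : ℝ) (μ' : Measure Ω) : Prop :=
  IsProbabilityMeasure μ' ∧ ∀ t : ℝ, 0 ≤ t → ∀ A : Set Ω,
    MeasurableSet[⨆ u ∈ Icc (0:ℝ) t, MeasurableSpace.comap (ξ u) (borel ℝ)] A →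
    μ' A = ENNReal.ofReal
      (∫ ω in A, Real.exp (l * ξ t ω - t * laplaceExponent μ ξ l) ∂μ)

open Topology

/-- pathwise sandwich bound for the exponential functional of a
Lévy process between the exponential functionals of the two compound Poisson
processes built from the Wiener–Hopf decomposition at Poisson times. -/
theorem expFunctional_sandwich
    {Ω : Type*} [MeasurableSpace Ω] (μ : Measure Ω) (ξ : ℝ → Ω → ℝ)
    (hLevy : IsLevyProcess μ ξ) (q : ℝ) (hq : 0 < q)
    (T : ℕ → Ω → ℝ) (hT0 : ∀ ω, T 0 ω = 0)
    (hTmono : ∀ ω n, T n ω < T (n + 1) ω)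
    (N : ℝ → Ω → ℕ)
    (hN : ∀ t : ℝ, 0 ≤ t → ∀ ω, T (N t ω) ω ≤ t ∧ t < T (N t ω + 1) ω)
    (M I Sp Sm : ℕ → Ω → ℝ)
    (hbddAbove : ∀ n ω, BddAbove ((fun t => ξ t ω) '' Ico (T n ω) (T (n + 1) ω)))
    (hbddBelow : ∀ n ω, BddBelow ((fun t => ξ t ω) '' Ico (T n ω) (T (n + 1) ω)))
    (hM : ∀ n ω, M n ω = sSup ((fun t => ξ t ω) '' Ico (T n ω) (T (n + 1) ω)))
    (hI : ∀ n ω, I n ω = sInf ((fun t => ξ t ω) '' Ico (T n ω) (T (n + 1) ω)))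
    (hMdec : ∀ n ω, M n ω = Sp n ω + M 0 ω)
    (hIdec : ∀ n ω, I n ω = Sm n ω + I 0 ω) :
    ∀ t : ℝ, 0 ≤ t → ∀ ω,
      Real.exp (-(M 0 ω)) * ∫ s in (0:ℝ)..t, Real.exp (-(Sp (N s ω) ω)) ≤
        ∫ s in (0:ℝ)..t, Real.exp (-(ξ s ω)) ∧
      (∫ s in (0:ℝ)..t, Real.exp (-(ξ s ω))) ≤
        Real.exp (-(I 0 ω)) * ∫ s in (0:ℝ)..t, Real.exp (-(Sm (N s ω) ω)) := by
  intro t ht ω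
  classical
  have hTsm : StrictMono fun n => T n ω := strictMono_nat_of_lt_succ fun n => hTmono ω n
  have hNmono : ∀ ⦃s s' : ℝ⦄, 0 ≤ s → s ≤ s' → N s ω ≤ N s' ω := by
    intro s s' hs hss
    have h1 := hN s hs ω
    have h2 := hN s' (hs.trans hss) ω
    have hlt : T (N s ω) ω < T (N s' ω + 1) ω := lt_of_le_of_lt (h1.1.trans hss) h2.2
    exact Nat.lt_succ_iff.mp (hTsm.lt_iff_lt.mp hlt)
  have hmem : ∀ s : ℝ, 0 ≤ s →
      ξ s ω ∈ (fun u => ξ u ω) '' Ico (T (N s ω) ω) (T (N s ω + 1) ω) := fun s hs =>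
    ⟨s, ⟨(hN s hs ω).1, (hN s hs ω).2⟩, rfl⟩
  have hξ_le_M : ∀ s : ℝ, 0 ≤ s → ξ s ω ≤ M (N s ω) ω := fun s hs => by
    rw [hM]; exact le_csSup (hbddAbove _ ω) (hmem s hs)
  have hI_le_ξ : ∀ s : ℝ, 0 ≤ s → I (N s ω) ω ≤ ξ s ω := fun s hs => by
    rw [hI]; exact csInf_le (hbddBelow _ ω) (hmem s hs)
  -- measurability of `s ↦ ξ s ω` via right continuity
  have hmeasξ : Measurable fun s : ℝ => ξ s ω := by
    have hmn : ∀ n : ℕ, Measurable fun s : ℝ => ξ (((⌈s * 2 ^ n⌉ : ℤ) : ℝ) / 2 ^ n) ω := fun n =>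
      (measurable_from_top (f := fun z : ℤ => ξ ((z : ℝ) / 2 ^ n) ω)).comp
        (Int.measurable_ceil.comp (measurable_id.mul_const _))
    refine measurable_of_tendsto_metrizable hmn ?_
    rw [tendsto_pi_nhds]
    intro s
    have hpow : ∀ n : ℕ, (0:ℝ) < 2 ^ n := fun n => pow_pos two_pos n
    have h1 : ∀ n : ℕ, s ≤ ((⌈s * 2 ^ n⌉ : ℤ) : ℝ) / 2 ^ n := fun n => by
      rw [le_div_iff₀ (hpow n)]; exact Int.le_ceil _
    have h2 : ∀ n : ℕ, ((⌈s * 2 ^ n⌉ : ℤ) : ℝ) / 2 ^ n ≤ s + (1 / 2 : ℝ) ^ n := fun n => by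
      rw [div_le_iff₀ (hpow n)]
      calc ((⌈s * 2 ^ n⌉ : ℤ) : ℝ) ≤ s * 2 ^ n + 1 := (Int.ceil_lt_add_one _).le
        _ = (s + (1 / 2 : ℝ) ^ n) * 2 ^ n := by
            rw [add_mul]
            congr 1
            rw [div_pow, one_pow, div_mul_cancel₀]
            exact (hpow n).ne'
    have hlim : Tendsto (fun n : ℕ => ((⌈s * 2 ^ n⌉ : ℤ) : ℝ) / 2 ^ n) atTop (𝓝 s) := by
      have hub : Tendsto (fun n : ℕ => s + (1 / 2 : ℝ) ^ n) atTop (𝓝 (s + 0)) :=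
        tendsto_const_nhds.add
          (tendsto_pow_atTop_nhds_zero_of_lt_one (by norm_num) (by norm_num))
      rw [add_zero] at hub
      exact tendsto_of_tendsto_of_tendsto_of_le_of_le tendsto_const_nhds hub h1 h2
    have hW : Tendsto (fun n : ℕ => ((⌈s * 2 ^ n⌉ : ℤ) : ℝ) / 2 ^ n) atTop (𝓝[Ici s] s) :=
      tendsto_nhdsWithin_of_tendsto_nhds_of_eventually_within _ hlim
        (Eventually.of_forall fun n => h1 n)
    exact (hLevy.cadlag_right ω s).tendsto.comp hW
  -- a measurable monotone extension of `N · ω`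
  set N' : ℝ → ℕ := fun s => N (max s 0) ω with hN'def
  have hN'mono : Monotone N' := fun s s' h =>
    hNmono (le_max_right s 0) (max_le_max h le_rfl)
  have hN'meas : Measurable N' := hN'mono.measurable
  have hN'eq : ∀ s : ℝ, 0 ≤ s → N' s = N s ω := fun s hs => by
    simp only [hN'def, max_eq_left hs]
  -- a generic bound over `n ≤ N t ω`
  have bound : ∀ F : ℕ → ℝ, ∃ C, ∀ n ≤ N t ω, Real.exp (-(F n)) ≤ C := fun F =>
    ⟨(Finset.range (N t ω + 1)).sup' ⟨0, by simp⟩ fun n => Real.exp (-(F n)), fun n hn =>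
      Finset.le_sup' (fun n => Real.exp (-(F n))) (Finset.mem_range.mpr (Nat.lt_succ_of_le hn))⟩
  -- integrability of step functionals
  have stepInt : ∀ F : ℕ → ℝ,
      IntervalIntegrable (fun s => Real.exp (-(F (N s ω)))) volume 0 t := by
    intro F
    rw [intervalIntegrable_iff_integrableOn_Ioc_of_le ht]
    obtain ⟨C, hC⟩ := bound F
    have hmeas : Measurable fun s => Real.exp (-(F (N' s))) :=
      Real.measurable_exp.comp ((measurable_from_nat (f := fun n => -(F n))).comp hN'meas)
    refine IntegrableOn.congr_fun (f := fun s => Real.exp (-(F (N' s)))) ?_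
      (fun s hs => by simp only [hN'eq s hs.1.le]) measurableSet_Ioc
    refine Measure.integrableOn_of_bounded (M := C) measure_Ioc_lt_top.ne
      hmeas.aestronglyMeasurable ((ae_restrict_iff' measurableSet_Ioc).mpr
        (Filter.Eventually.of_forall fun s hs => ?_))
    rw [Real.norm_eq_abs, Real.abs_exp, hN'eq s hs.1.le]
    exact hC _ (hNmono hs.1.le hs.2)
  -- integrability of `s ↦ exp (-ξ s ω)`
  have ξInt : IntervalIntegrable (fun s => Real.exp (-(ξ s ω))) volume 0 t := by
    rw [intervalIntegrable_iff_integrableOn_Ioc_of_le ht]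
    obtain ⟨C, hC⟩ := bound fun n => I n ω
    refine Measure.integrableOn_of_bounded (M := C) measure_Ioc_lt_top.ne
      (Real.measurable_exp.comp hmeasξ.neg).aestronglyMeasurable
      ((ae_restrict_iff' measurableSet_Ioc).mpr
        (Filter.Eventually.of_forall fun s hs => ?_))
    rw [Real.norm_eq_abs, Real.abs_exp]
    calc Real.exp (-(ξ s ω)) ≤ Real.exp (-(I (N s ω) ω)) :=
          Real.exp_le_exp.mpr (neg_le_neg (hI_le_ξ s hs.1.le))
      _ ≤ C := hC _ (hNmono hs.1.le hs.2)
  constructor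
  · have e1 : Real.exp (-(M 0 ω)) * ∫ s in (0:ℝ)..t, Real.exp (-(Sp (N s ω) ω))
        = ∫ s in (0:ℝ)..t, Real.exp (-(M (N s ω) ω)) := by
      rw [← intervalIntegral.integral_const_mul]
      refine intervalIntegral.integral_congr fun s _ => ?_
      rw [← Real.exp_add]
      congr 1
      rw [hMdec (N s ω) ω]
      ring
    rw [e1]
    exact intervalIntegral.integral_mono_on ht (stepInt fun n => M n ω) ξInt
      fun s hs => Real.exp_le_exp.mpr (neg_le_neg (hξ_le_M s hs.1))
  · have e2 : Real.exp (-(I 0 ω)) * ∫ s in (0:ℝ)..t, Real.exp (-(Sm (N s ω) ω))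
        = ∫ s in (0:ℝ)..t, Real.exp (-(I (N s ω) ω)) := by
      rw [← intervalIntegral.integral_const_mul]
      refine intervalIntegral.integral_congr fun s _ => ?_
      rw [← Real.exp_add]
      congr 1
      rw [hIdec (N s ω) ω]
      ring
    rw [e2]
    exact intervalIntegral.integral_mono_on ht ξInt (stepInt fun n => I n ω)
      fun s hs => Real.exp_le_exp.mpr (neg_le_neg (hI_le_ξ s hs.1))
end
end

section
/- Let F : ℝ₊ → ℝ satisfy F(x) = k(x+1)^{−p}[1 + (1+x)^{−ς} h(x)] for all x > 0, with k > 0, p > 0, ς ≥ 1, and h bounded and Lipschitz. Then there exist η > 0 and M < ∞ such that for all x, y ≥ 0 and all ε ∈ [0, η]: |F(x) − k x^{−p}| ≤ M x^{−(1+ε)p} and |F(x) − F(y)| ≤ M |x^{−p} − y^{−p}|. -/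
open MeasureTheory ProbabilityTheory Filter Set Real

noncomputable section

/-!
With `q = p + ς`, `F(x) = k (1+x)^{-p} + k (1+x)^{-q} h(x)`, and everything reduces to comparing
increments of powers on `(0, ∞)` through their derivatives. For the first estimate,
`x^{-p} - (1+x)^{-p}` and `(1+x)^{-q}` are bounded by multiples of both `x^{-p}` and `x^{-p-1}`,
hence of `x^{-(1+ε)p}` as long as `ε p ≤ 1`. For the second, `q (1+t)^{-q-1} ≤ q t^{-p-1}` bounds
the increments of `(1+t)^{-q}` by `q/p` times those of `t^{-p}`, and the Lipschitz increment
`(1+b)^{-q} L (b - a) ≤ L b^{-p-1} (b - a)` is absorbed by the tangent-line bound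
`p b^{-p-1} (b - a) ≤ a^{-p} - b^{-p}` of the convex function `t^{-p}`.
-/

theorem sub_le_sub_of_hasDerivAt_le {f g f' g' : ℝ → ℝ} {a b : ℝ} (hab : a ≤ b)
    (hf : ∀ t ∈ Icc a b, HasDerivAt f (f' t) t) (hg : ∀ t ∈ Icc a b, HasDerivAt g (g' t) t)
    (hle : ∀ t ∈ Ioo a b, f' t ≤ g' t) : f b - f a ≤ g b - g a := by
  have hmono : MonotoneOn (fun t => g t - f t) (Icc a b) :=
    monotoneOn_of_hasDerivWithinAt_nonneg (convex_Icc a b)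
      (fun t ht => ((hg t ht).sub (hf t ht)).continuousAt.continuousWithinAt)
      (fun t ht => ((hg t (interior_subset ht)).sub (hf t (interior_subset ht))).hasDerivWithinAt)
      (fun t ht => sub_nonneg.2 (hle t (by rwa [interior_Icc] at ht)))
  linarith [hmono (left_mem_Icc.2 hab) (right_mem_Icc.2 hab) hab]

theorem min_rpow_le_rpow {x a b c : ℝ} (hx : 0 < x) (hab : a ≤ b) (hbc : b ≤ c) :
    min (x ^ a) (x ^ c) ≤ x ^ b := by
  rcases le_total x 1 with hx1 | hx1
  · exact (min_le_right _ _).trans (rpow_le_rpow_of_exponent_ge hx hx1 hbc)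
  · exact (min_le_left _ _).trans (rpow_le_rpow_of_exponent_le hx1 hab)

theorem one_add_rpow_neg_le_rpow_neg {t r s : ℝ} (ht : 0 < t) (hr : 0 ≤ r) (hrs : r ≤ s) :
    (1 + t) ^ (-s) ≤ t ^ (-r) :=
  calc (1 + t) ^ (-s) ≤ (1 + t) ^ (-r) := rpow_le_rpow_of_exponent_le (by linarith) (by linarith)
    _ ≤ t ^ (-r) := rpow_le_rpow_of_nonpos ht (by linarith) (by linarith)

theorem one_add_rpow_neg_le_rpow_neg_sub_one {t p q : ℝ} (ht : 0 < t) (hp : 0 ≤ p)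
    (hpq : p + 1 ≤ q) : (1 + t) ^ (-q) ≤ t ^ (-p - 1) := by
  simpa only [neg_add'] using one_add_rpow_neg_le_rpow_neg (r := p + 1) ht (by linarith) hpq

theorem hasDerivAt_rpow_neg (p : ℝ) {t : ℝ} (ht : t ≠ 0) :
    HasDerivAt (fun t : ℝ => t ^ (-p)) (-p * t ^ (-p - 1)) t := by
  simpa using hasDerivAt_rpow_const (p := -p) (Or.inl ht)

section TangentBounds

variable {p a b : ℝ}

theorem rpow_neg_sub_rpow_neg_le (hp : 0 ≤ p) (ha : 0 < a) (hab : a ≤ b) :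
    a ^ (-p) - b ^ (-p) ≤ p * a ^ (-p - 1) * (b - a) := by
  have key := sub_le_sub_of_hasDerivAt_le (f := fun t => -t ^ (-p))
    (g := fun t => p * a ^ (-p - 1) * t) hab
    (fun t ht => (hasDerivAt_rpow_neg p (ha.trans_le ht.1).ne').neg)
    (fun t _ => (hasDerivAt_id t).const_mul _)
    (fun t ht => by
      have := rpow_le_rpow_of_nonpos ha ht.1.le (by linarith : -p - 1 ≤ 0)
      simp only [neg_mul, neg_neg, mul_one]
      exact mul_le_mul_of_nonneg_left this hp)
  linarith

theorem le_rpow_neg_sub_rpow_neg (hp : 0 ≤ p) (ha : 0 < a) (hab : a ≤ b) :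
    p * b ^ (-p - 1) * (b - a) ≤ a ^ (-p) - b ^ (-p) := by
  have key := sub_le_sub_of_hasDerivAt_le (f := fun t => p * b ^ (-p - 1) * t)
    (g := fun t => -t ^ (-p)) hab
    (fun t _ => (hasDerivAt_id t).const_mul _)
    (fun t ht => (hasDerivAt_rpow_neg p (ha.trans_le ht.1).ne').neg)
    (fun t ht => by
      have := rpow_le_rpow_of_nonpos (ha.trans ht.1) ht.2.le (by linarith : -p - 1 ≤ 0)
      simp only [neg_mul, neg_neg, mul_one]
      exact mul_le_mul_of_nonneg_left this hp)
  linarith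

theorem one_add_rpow_neg_sub_le {q : ℝ} (hp : 0 < p) (hpq : p ≤ q) (ha : 0 < a) (hab : a ≤ b) :
    (1 + a) ^ (-q) - (1 + b) ^ (-q) ≤ q / p * (a ^ (-p) - b ^ (-p)) := by
  have key := sub_le_sub_of_hasDerivAt_le (f := fun t => -(1 + t) ^ (-q))
    (g := fun t => -(q / p * t ^ (-p))) hab
    (fun t ht => by
      have hd : HasDerivAt (fun t : ℝ => (1 + t) ^ (-q)) (-q * (1 + t) ^ (-q - 1)) t := by
        simpa using ((hasDerivAt_id t).const_add 1).rpow_const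
          (p := -q) (Or.inl (by linarith [ht.1] : (1 + t) ≠ 0))
      exact hd.neg)
    (fun t ht => ((hasDerivAt_rpow_neg p (ha.trans_le ht.1).ne').const_mul _).neg)
    (fun t ht => by
      have := one_add_rpow_neg_le_rpow_neg (ha.trans ht.1) (by linarith)
        (by linarith : p + 1 ≤ q + 1)
      rw [neg_add', neg_add'] at this
      field_simp
      exact mul_le_mul_of_nonneg_left this (by linarith))
  linarith

end TangentBounds

/-- The form (A1), `k (1 + x)^{-p} (1 + (1 + x)^{-ς} h x)`, expanded with `q = p + ς`. -/
def perturbedDecay (k p q : ℝ) (h : ℝ → ℝ) (x : ℝ) : ℝ :=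
  k * (1 + x) ^ (-p) + k * (1 + x) ^ (-q) * h x

section PerturbedDecay

variable {k p q C : ℝ} {h : ℝ → ℝ}

theorem abs_perturbedDecay_sub_le (hk : 0 ≤ k) (hp : 0 ≤ p) (hpq : p + 1 ≤ q)
    (hC : ∀ x, |h x| ≤ C) {x : ℝ} (hx : 0 < x) :
    |perturbedDecay k p q h x - k * x ^ (-p)| ≤
      k * (1 + p + C) * min (x ^ (-p - 1)) (x ^ (-p)) := by
  set m := min (x ^ (-p - 1)) (x ^ (-p))
  have hdecr : (1 + x) ^ (-p) ≤ x ^ (-p) := one_add_rpow_neg_le_rpow_neg hx hp le_rfl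
  have hleading : x ^ (-p) - (1 + x) ^ (-p) ≤ (1 + p) * m := by
    have htangent := rpow_neg_sub_rpow_neg_le hp hx (by linarith : x ≤ 1 + x)
    rw [add_sub_cancel_right, mul_one] at htangent
    have : 0 ≤ (1 + x) ^ (-p) := (rpow_pos_of_pos (by linarith) _).le
    rcases min_choice (x ^ (-p - 1)) (x ^ (-p)) with hm | hm <;> simp only [m, hm] <;>
      nlinarith [(rpow_pos_of_pos hx (-p)).le, (rpow_pos_of_pos hx (-p - 1)).le]
  have hcorrection : |(1 + x) ^ (-q) * h x| ≤ C * m := by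
    have hsmall : (1 + x) ^ (-q) ≤ m :=
      le_min (one_add_rpow_neg_le_rpow_neg_sub_one hx hp hpq)
        (one_add_rpow_neg_le_rpow_neg hx hp (by linarith))
    have hq : 0 ≤ (1 + x) ^ (-q) := (rpow_pos_of_pos (by linarith) _).le
    rw [abs_mul, abs_of_nonneg hq]
    nlinarith [hC x, abs_nonneg (h x)]
  have hsplit : perturbedDecay k p q h x - k * x ^ (-p) =
      -(k * (x ^ (-p) - (1 + x) ^ (-p))) + k * ((1 + x) ^ (-q) * h x) := by
    rw [perturbedDecay]; ring
  rw [hsplit]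
  calc _ ≤ |k * (x ^ (-p) - (1 + x) ^ (-p))| + |k * ((1 + x) ^ (-q) * h x)| :=
        (abs_add_le _ _).trans_eq (by rw [abs_neg])
    _ ≤ k * ((1 + p) * m) + k * (C * m) := by
        rw [abs_mul, abs_mul, abs_of_nonneg hk, abs_of_nonneg (sub_nonneg.2 hdecr)]
        gcongr
    _ = k * (1 + p + C) * m := by ring

theorem abs_perturbedDecay_sub_perturbedDecay_le_of_le (hk : 0 ≤ k) (hp : 0 < p)
    (hpq : p + 1 ≤ q) (hC : ∀ x, |h x| ≤ C) {L : NNReal} (hL : LipschitzWith L h)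
    {a b : ℝ} (ha : 0 < a) (hab : a ≤ b) :
    |perturbedDecay k p q h a - perturbedDecay k p q h b| ≤
      k * (1 + C * (q / p) + L / p) * (a ^ (-p) - b ^ (-p)) := by
  set D := a ^ (-p) - b ^ (-p)
  have hb : 0 < b := ha.trans_le hab
  have hD : 0 ≤ D := sub_nonneg.2 (rpow_le_rpow_of_nonpos ha hab (by linarith))
  have hleading : |(1 + a) ^ (-p) - (1 + b) ^ (-p)| ≤ D := by
    have := one_add_rpow_neg_sub_le hp le_rfl ha hab
    rw [div_self hp.ne', one_mul] at this
    rwa [abs_of_nonneg (sub_nonneg.2 (rpow_le_rpow_of_nonpos (by linarith) (by linarith)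
      (by linarith)))]
  have hshift : |((1 + a) ^ (-q) - (1 + b) ^ (-q)) * h a| ≤ C * (q / p) * D := by
    rw [abs_mul, abs_of_nonneg (sub_nonneg.2 (rpow_le_rpow_of_nonpos (by linarith) (by linarith)
      (by linarith)))]
    calc _ ≤ q / p * D * C :=
          mul_le_mul (one_add_rpow_neg_sub_le hp (by linarith) ha hab) (hC a) (abs_nonneg _)
            (mul_nonneg (div_nonneg (by linarith) hp.le) hD)
      _ = C * (q / p) * D := by ring
  have hlip : |(1 + b) ^ (-q) * (h a - h b)| ≤ L / p * D := by
    have hdist : |h a - h b| ≤ L * (b - a) := by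
      simpa [Real.dist_eq, abs_sub_comm a b, abs_of_nonneg (sub_nonneg.2 hab)] using
        hL.dist_le_mul a b
    calc _ = (1 + b) ^ (-q) * |h a - h b| := by
          rw [abs_mul, abs_of_nonneg (rpow_pos_of_pos (by linarith) _).le]
      _ ≤ b ^ (-p - 1) * (L * (b - a)) :=
          mul_le_mul (one_add_rpow_neg_le_rpow_neg_sub_one hb hp.le hpq) hdist (abs_nonneg _)
            (rpow_pos_of_pos hb _).le
      _ = L / p * (p * b ^ (-p - 1) * (b - a)) := by field_simp
      _ ≤ L / p * D := by gcongr; exact le_rpow_neg_sub_rpow_neg hp.le ha hab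
  have hsplit : perturbedDecay k p q h a - perturbedDecay k p q h b =
      k * ((1 + a) ^ (-p) - (1 + b) ^ (-p)) + k * (((1 + a) ^ (-q) - (1 + b) ^ (-q)) * h a)
        + k * ((1 + b) ^ (-q) * (h a - h b)) := by
    simp only [perturbedDecay]; ring
  rw [hsplit]
  calc _ ≤ _ := abs_add_three _ _ _
    _ ≤ k * D + k * (C * (q / p) * D) + k * (L / p * D) := by
        rw [abs_mul k, abs_mul k, abs_mul k, abs_of_nonneg hk]
        gcongr
    _ = _ := by ring

theorem abs_perturbedDecay_sub_perturbedDecay_le (hk : 0 ≤ k) (hp : 0 < p)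
    (hpq : p + 1 ≤ q) (hC : ∀ x, |h x| ≤ C) {L : NNReal} (hL : LipschitzWith L h)
    {a b : ℝ} (ha : 0 < a) (hb : 0 < b) :
    |perturbedDecay k p q h a - perturbedDecay k p q h b| ≤
      k * (1 + C * (q / p) + L / p) * |a ^ (-p) - b ^ (-p)| := by
  wlog hab : a ≤ b generalizing a b
  · rw [abs_sub_comm, abs_sub_comm (a ^ (-p))]
    exact this hb ha (le_of_not_ge hab)
  rw [abs_of_nonneg (sub_nonneg.2 (rpow_le_rpow_of_nonpos ha hab (by linarith)))]
  exact abs_perturbedDecay_sub_perturbedDecay_le_of_le hk hp hpq hC hL ha hab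

end PerturbedDecay

/-- technical estimates for functions of the form (A1):
`|F(x) - k x^{-p}| ≤ M x^{-(1+ε)p}` and `|F(x) - F(y)| ≤ M |x^{-p} - y^{-p}|`. -/
theorem A1_function_estimates
    (F h : ℝ → ℝ) (k p ς : ℝ) (hk : 0 < k) (hp : 0 < p) (hς : 1 ≤ ς)
    (hbound : ∃ C : ℝ, ∀ x : ℝ, |h x| ≤ C)
    (hLip : ∃ L : NNReal, LipschitzWith L h)
    (hF : ∀ x : ℝ, 0 < x →
      F x = k * (x + 1) ^ (-p) * (1 + (1 + x) ^ (-ς) * h x)) :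
    ∃ η : ℝ, 0 < η ∧ ∃ M : ℝ, 0 ≤ M ∧
      ∀ x : ℝ, 0 < x → ∀ y : ℝ, 0 < y → ∀ ε ∈ Icc (0:ℝ) η,
        |F x - k * x ^ (-p)| ≤ M * x ^ (-((1 + ε) * p)) ∧
        |F x - F y| ≤ M * |x ^ (-p) - y ^ (-p)| := by
  obtain ⟨C, hC⟩ := hbound
  obtain ⟨L, hL⟩ := hLip
  have hC₀ : 0 ≤ C := (abs_nonneg _).trans (hC 0)
  have hpq : p + 1 ≤ p + ς := by linarith
  have hF' : ∀ x, 0 < x → F x = perturbedDecay k p (p + ς) h x := fun x hx => by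
    rw [hF x hx, perturbedDecay, add_comm x 1, neg_add, rpow_add (by linarith)]
    ring
  refine ⟨1 / p, by positivity, max (k * (1 + p + C)) (k * (1 + C * ((p + ς) / p) + L / p)),
    le_max_of_le_left (by positivity), fun x hx y hy ε ⟨hε₀, hεη⟩ => ⟨?_, ?_⟩⟩
  · have hεp : ε * p ≤ 1 := (le_div_iff₀ hp).1 hεη
    calc |F x - k * x ^ (-p)| ≤ k * (1 + p + C) * min (x ^ (-p - 1)) (x ^ (-p)) := by
          rw [hF' x hx]; exact abs_perturbedDecay_sub_le hk.le hp.le hpq hC hx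
      _ ≤ _ := mul_le_mul (le_max_left _ _)
          (min_rpow_le_rpow hx (by nlinarith) (by nlinarith)) (by positivity)
          (le_max_of_le_left (by positivity))
  · rw [hF' x hx, hF' y hy]
    exact (abs_perturbedDecay_sub_perturbedDecay_le hk.le hp hpq hC hL hx hy).trans
      (mul_le_mul_of_nonneg_right (le_max_right _ _) (abs_nonneg _))
end
end

section
/- Let (a_{n,q}), (a'_{n,q}) be nonnegative double sequences and (b_n) a nonnegative sequence with a_{n,q} ≤ b_n ≤ a'_{n,q} for all n, q. Suppose lim_{n→∞} a_{n,q} = c⁻(q)a(q), lim_{n→∞} a'_{n,q} = c⁺(q)a(q), and lim_{q→∞} c⁻(q) = lim_{q→∞} c⁺(q) = 1. Then lim_{q→∞} a(q) and lim_{n→∞} b_n both exist and are equal to a common nonnegative constant. -/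
open MeasureTheory ProbabilityTheory Filter Set Real

noncomputable section

/-!
Every lower sequence `a_{·,q}` stays below `b`, so its limit `c⁻(q) a(q)` is at most
`liminf b`; symmetrically `limsup b ≤ c⁺(q) a(q)`. Hence
`limsup b / c⁺(q) ≤ a(q) ≤ liminf b / c⁻(q)` once `c^±(q) > 0`, and letting `q → ∞`
squeezes `limsup b ≤ liminf b`: `b` converges, and `a(q)` is squeezed to the same limit.
-/

section LiminfLimsup

variable {ι α : Type*} [ConditionallyCompleteLinearOrder α] [TopologicalSpace α]
  [OrderTopology α] {f : Filter ι} [f.NeBot] {u b : ι → α} {x : α}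

theorem le_liminf_of_tendsto_of_eventuallyLE (hu : Tendsto u f (nhds x)) (hub : u ≤ᶠ[f] b)
    (hb : IsBoundedUnder (· ≤ ·) f b) : x ≤ liminf b f :=
  hu.liminf_eq ▸ liminf_le_liminf hub hu.isBoundedUnder_ge hb.isCoboundedUnder_ge

theorem limsup_le_of_tendsto_of_eventuallyLE (hu : Tendsto u f (nhds x)) (hbu : b ≤ᶠ[f] u)
    (hb : IsBoundedUnder (· ≥ ·) f b) : limsup b f ≤ x :=
  hu.limsup_eq ▸ limsup_le_limsup hbu hb.isCoboundedUnder_le hu.isBoundedUnder_le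

end LiminfLimsup

theorem tendsto_const_div_of_tendsto_one {ι : Type*} {l : Filter ι} {c : ι → ℝ}
    (hc : Tendsto c l (nhds 1)) (L : ℝ) : Tendsto (fun i => L / c i) l (nhds L) := by
  have h := (tendsto_const_nhds (x := L)).div hc one_ne_zero
  rwa [div_one] at h

theorem eq_and_tendsto_of_mul_le_of_le_mul {ι : Type*} {l : Filter ι} [l.NeBot]
    {x cm cp : ι → ℝ} {Lm Lp : ℝ} (hcm : Tendsto cm l (nhds 1)) (hcp : Tendsto cp l (nhds 1))
    (hlow : ∀ i, cm i * x i ≤ Lm) (hup : ∀ i, Lp ≤ cp i * x i) (hLmLp : Lm ≤ Lp) :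
    Lm = Lp ∧ Tendsto x l (nhds Lm) := by
  have hbounds : ∀ᶠ i in l, Lp / cp i ≤ x i ∧ x i ≤ Lm / cm i := by
    filter_upwards [hcm.eventually (eventually_gt_nhds one_pos),
      hcp.eventually (eventually_gt_nhds one_pos)] with i hcm_pos hcp_pos
    exact ⟨(div_le_iff₀' hcp_pos).2 (hup i), (le_div_iff₀' hcm_pos).2 (hlow i)⟩
  have hLm := tendsto_const_div_of_tendsto_one hcm Lm
  have hLp := tendsto_const_div_of_tendsto_one hcp Lp
  have heq : Lm = Lp :=
    hLmLp.antisymm <| le_of_tendsto_of_tendsto hLp hLm <| hbounds.mono fun _ h => h.1.trans h.2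
  exact ⟨heq, tendsto_of_tendsto_of_tendsto_of_le_of_le' (heq ▸ hLp) hLm
    (hbounds.mono fun _ h => h.1) (hbounds.mono fun _ h => h.2)⟩

/-- sandwiching lemma for double sequences (Lemma 3 of the
Appendix): if `a_{n,q} ≤ b_n ≤ a'_{n,q}`, `a_{n,q} → c⁻(q)a(q)`,
`a'_{n,q} → c⁺(q)a(q)` as `n → ∞` and `c⁻(q), c⁺(q) → 1` as `q → ∞`, then
`a(q)` and `b_n` converge to a common nonnegative limit. -/
theorem sandwich_double_sequences
    (a a' : ℕ → ℕ → ℝ) (b : ℕ → ℝ) (aq cm cp : ℕ → ℝ)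
    (hnonneg : ∀ n q, 0 ≤ a n q ∧ 0 ≤ a' n q ∧ 0 ≤ b n)
    (hle : ∀ n q, a n q ≤ b n ∧ b n ≤ a' n q)
    (hlim : ∀ q, Tendsto (fun n => a n q) atTop (nhds (cm q * aq q)))
    (hlim' : ∀ q, Tendsto (fun n => a' n q) atTop (nhds (cp q * aq q)))
    (hcm : Tendsto cm atTop (nhds 1)) (hcp : Tendsto cp atTop (nhds 1)) :
    ∃ L : ℝ, 0 ≤ L ∧ Tendsto aq atTop (nhds L) ∧ Tendsto b atTop (nhds L) := by
  have hb_nonneg : ∀ n, 0 ≤ b n := fun n => (hnonneg n 0).2.2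
  have hb_ge : IsBoundedUnder (· ≥ ·) atTop b := isBoundedUnder_of ⟨0, hb_nonneg⟩
  have hb_le : IsBoundedUnder (· ≤ ·) atTop b :=
    (hlim' 0).isBoundedUnder_le.mono_le (Eventually.of_forall fun n => (hle n 0).2)
  obtain ⟨heq, haq⟩ := eq_and_tendsto_of_mul_le_of_le_mul hcm hcp
    (fun q => le_liminf_of_tendsto_of_eventuallyLE (hlim q)
      (Eventually.of_forall fun n => (hle n q).1) hb_le)
    (fun q => limsup_le_of_tendsto_of_eventuallyLE (hlim' q)
      (Eventually.of_forall fun n => (hle n q).2) hb_ge)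
    (liminf_le_limsup hb_le hb_ge)
  exact ⟨_, le_liminf_of_le hb_le.isCoboundedUnder_ge (Eventually.of_forall hb_nonneg), haq,
    tendsto_of_liminf_eq_limsup rfl heq.symm hb_le hb_ge⟩
end
end
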